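/- Let F be a linearly ordered field and A, B ∈ Sₙ⁺(F). With A ⊒ B meaning ∃ r ∈ ℕ, A ≤ r·B (Loewner order), and A : B = A(A+B)⁺B the parallel sum: A : B ⊒ A, A : B ⊒ B, and if C ∈ Sₙ⁺(F) satisfies C ⊒ A and C ⊒ B then C ⊒ A : B. Hence the class of A : B is the least upper bound of the classes of A and B. -/

import Mathlib

/-!
Write `M = A + B`. Positive semidefiniteness of `A` and `B` gives `ker M ⊆ ker A ∩ ker B`, hence
`A P M = A` and `M P B = B`; so `A - A P B = A P A` and `B - A P B = B P B` are positive
semidefinite, i.e. `A : B ≤ A, B`. Conversely, splitting `v = u + w` with `u = P B v` and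
`w = (1 - P B) v` gives `vᵀ (A : B) v = uᵀ A u + wᵀ B w`, so `C ≤ r A` and `C ≤ s B` yield
`vᵀ C v ≤ 2 uᵀ C u + 2 wᵀ C w ≤ 2 (r + s) vᵀ (A : B) v`.
-/

open Matrix

def PSD {F : Type*} [Field F] [LinearOrder F] [IsStrictOrderedRing F] {n : ℕ} (M : Matrix (Fin n) (Fin n) F) : Prop :=
  ∀ v : Fin n → F, 0 ≤ v ⬝ᵥ M.mulVec v

/-- `P` is the Moore–Penrose inverse of `M` (Penrose conditions). -/
def IsMoorePenrose {F : Type*} [Field F] [LinearOrder F] [IsStrictOrderedRing F] {n : ℕ}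
    (M P : Matrix (Fin n) (Fin n) F) : Prop :=
  M * P * M = M ∧ P * M * P = P ∧ (M * P)ᵀ = M * P ∧ (P * M)ᵀ = P * M

/-- `A ⊒ B` iff `A ≤ r·B` (Loewner) for some natural `r`. -/
def Sqsupseteq {F : Type*} [Field F] [LinearOrder F] [IsStrictOrderedRing F] {n : ℕ}
    (A B : Matrix (Fin n) (Fin n) F) : Prop :=
  ∃ r : ℕ, PSD ((r : F) • B - A)

lemma Matrix.dotProduct_transpose_mul_mul_mulVec {R m k : Type*} [CommRing R] [Fintype m]
    [Fintype k] (S : Matrix k m R) (X : Matrix k k R) (v : m → R) :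
    v ⬝ᵥ (Sᵀ * X * S) *ᵥ v = S *ᵥ v ⬝ᵥ X *ᵥ (S *ᵥ v) := by
  rw [← mulVec_mulVec, ← mulVec_mulVec, dotProduct_mulVec, vecMul_transpose]

lemma Matrix.mul_mul_eq_of_ker_le {R m k : Type*} [CommRing R] [Fintype m] [Fintype k]
    {A : Matrix m k R} {M : Matrix k k R} {P : Matrix k k R} (hMPM : M * P * M = M)
    (hker : ∀ v, M *ᵥ v = 0 → A *ᵥ v = 0) : A * P * M = A := by
  refine ext_iff_mulVec.2 fun v => ?_
  have h := hker (v - (P * M) *ᵥ v) <| by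
    rw [mulVec_sub, mulVec_mulVec, ← mul_assoc, hMPM, sub_self]
  rw [mulVec_sub, mulVec_mulVec, sub_eq_zero] at h
  rw [Matrix.mul_assoc]
  exact h.symm

section Quadratic

variable {F : Type*} [Field F] [LinearOrder F] [IsStrictOrderedRing F] {n : ℕ}

lemma PSD.transpose_mul_mul {X : Matrix (Fin n) (Fin n) F} (hX : PSD X)
    (R : Matrix (Fin n) (Fin n) F) : PSD (Rᵀ * X * R) := fun v => by
  rw [dotProduct_transpose_mul_mul_mulVec]
  exact hX _

lemma PSD.add {X Y : Matrix (Fin n) (Fin n) F} (hX : PSD X) (hY : PSD Y) : PSD (X + Y) :=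
  fun v => by
    rw [add_mulVec, dotProduct_add]
    exact add_nonneg (hX v) (hY v)

lemma psd_smul_sub_iff (c : F) (X Y : Matrix (Fin n) (Fin n) F) :
    PSD (c • Y - X) ↔ ∀ v, v ⬝ᵥ X *ᵥ v ≤ c * (v ⬝ᵥ Y *ᵥ v) := by
  simp only [PSD, sub_mulVec, smul_mulVec, dotProduct_sub, dotProduct_smul, smul_eq_mul,
    sub_nonneg]

lemma PSD.dotProduct_add_mulVec_add_le {X : Matrix (Fin n) (Fin n) F} (hX : PSD X)
    (u w : Fin n → F) :
    (u + w) ⬝ᵥ X *ᵥ (u + w) ≤ 2 * (u ⬝ᵥ X *ᵥ u) + 2 * (w ⬝ᵥ X *ᵥ w) := by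
  have := hX (u - w)
  simp only [mulVec_add, mulVec_sub, dotProduct_add, dotProduct_sub, add_dotProduct,
    sub_dotProduct] at this ⊢
  linarith

lemma eq_zero_of_forall_nonneg_add_mul {a b : F} (h : ∀ t : F, 0 ≤ a + t * b) : b = 0 := by
  by_contra hb
  have := h (-(a + 1) / b)
  rw [div_mul_cancel₀ _ hb] at this
  linarith

lemma PSD.mulVec_eq_zero {X : Matrix (Fin n) (Fin n) F} (hXs : X.IsSymm) (hX : PSD X)
    {v : Fin n → F} (hv : v ⬝ᵥ X *ᵥ v = 0) : X *ᵥ v = 0 := by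
  refine dotProduct_eq_zero _ fun w => ?_
  have hsymm : v ⬝ᵥ X *ᵥ w = X *ᵥ v ⬝ᵥ w := by
    rw [dotProduct_mulVec, ← vecMul_transpose, hXs.eq]
  have h2 : 2 * (X *ᵥ v ⬝ᵥ w) = 0 := eq_zero_of_forall_nonneg_add_mul fun t => by
    have := hX (w + t • v)
    simp only [mulVec_add, mulVec_smul, dotProduct_add, add_dotProduct, dotProduct_smul,
      smul_dotProduct, smul_eq_mul, hv, hsymm, dotProduct_comm w (X *ᵥ v)] at this
    linarith
  simpa using h2

lemma mulVec_eq_zero_of_add_mulVec_eq_zero {X Y : Matrix (Fin n) (Fin n) F} (hXs : X.IsSymm)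
    (hX : PSD X) (hY : PSD Y) {v : Fin n → F} (hv : (X + Y) *ᵥ v = 0) : X *ᵥ v = 0 := by
  have h := congrArg (v ⬝ᵥ ·) hv
  simp only [add_mulVec, dotProduct_add, dotProduct_zero] at h
  exact hX.mulVec_eq_zero hXs (le_antisymm (by linarith [hY v]) (hX v))

end Quadratic

namespace IsMoorePenrose

variable {F : Type*} [Field F] [LinearOrder F] [IsStrictOrderedRing F] {n : ℕ}
  {M P Q : Matrix (Fin n) (Fin n) F}

lemma transpose (hP : IsMoorePenrose M P) : IsMoorePenrose Mᵀ Pᵀ := by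
  obtain ⟨h1, h2, h3, h4⟩ := hP
  refine ⟨?_, ?_, ?_, ?_⟩
  · rw [← transpose_mul, ← transpose_mul, ← mul_assoc, h1]
  · rw [← transpose_mul, ← transpose_mul, ← mul_assoc, h2]
  · rw [← transpose_mul, transpose_transpose, h4]
  · rw [← transpose_mul, transpose_transpose, h3]

lemma unique (hP : IsMoorePenrose M P) (hQ : IsMoorePenrose M Q) : P = Q := by
  obtain ⟨hP1, hP2, hP3, hP4⟩ := hP
  obtain ⟨hQ1, hQ2, hQ3, hQ4⟩ := hQ
  have hP' : P = P * M * Q := calc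
    P = P * (M * P)ᵀ := by rw [hP3, ← mul_assoc, hP2]
    _ = P * (M * Q * (M * P))ᵀ := by rw [← mul_assoc, hQ1]
    _ = P * M * P * (M * Q) := by rw [transpose_mul, hP3, hQ3]; simp only [mul_assoc]
    _ = P * M * Q := by rw [hP2, mul_assoc P M Q]
  have hQ' : Q = P * M * Q := calc
    Q = (Q * M)ᵀ * Q := by rw [hQ4, hQ2]
    _ = (Q * M * (P * M))ᵀ * Q := by rw [mul_assoc Q M, ← mul_assoc M P M, hP1]
    _ = P * M * Q * M * Q := by rw [transpose_mul, hP4, hQ4]; simp only [mul_assoc]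
    _ = P * M * Q := by rw [mul_assoc (P * M) Q M, mul_assoc (P * M), hQ2]
  exact hP'.trans hQ'.symm

lemma transpose_eq (hMs : M.IsSymm) (hP : IsMoorePenrose M P) : Pᵀ = P := by
  have := hP.transpose
  rw [hMs.eq] at this
  exact this.unique hP

lemma psd (hMs : M.IsSymm) (hM : PSD M) (hP : IsMoorePenrose M P) : PSD P := by
  have h := hM.transpose_mul_mul P
  rwa [hP.transpose_eq hMs, hP.2.1] at h

end IsMoorePenrose

lemma sqsupseteq_of_forall_exists_add_le {F : Type*} [Field F] [LinearOrder F]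
    [IsStrictOrderedRing F] {n : ℕ} {A B C X : Matrix (Fin n) (Fin n) F} (hA : PSD A)
    (hB : PSD B) (hC : PSD C) (hCA : Sqsupseteq C A) (hCB : Sqsupseteq C B)
    (hX : ∀ v, ∃ u w, u + w = v ∧ u ⬝ᵥ A *ᵥ u + w ⬝ᵥ B *ᵥ w ≤ v ⬝ᵥ X *ᵥ v) :
    Sqsupseteq C X := by
  obtain ⟨r, hr⟩ := hCA
  obtain ⟨s, hs⟩ := hCB
  rw [psd_smul_sub_iff] at hr hs
  refine ⟨2 * (r + s), (psd_smul_sub_iff _ _ _).2 fun v => ?_⟩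
  obtain ⟨u, w, rfl, huw⟩ := hX v
  have := hC.dotProduct_add_mulVec_add_le u w
  push_cast
  nlinarith [hr u, hs w, hA u, hB w, r.cast_nonneg (α := F), s.cast_nonneg (α := F)]

section MatrixIdentities

variable {R m : Type*} [CommRing R] [Fintype m] [DecidableEq m] {A B P : Matrix m m R}

lemma Matrix.sub_mul_mul_eq_right (hMPB : (A + B) * P * B = B) :
    B - A * P * B = B * P * B := by
  rw [add_mul, add_mul] at hMPB
  exact sub_eq_of_eq_add' hMPB.symm

lemma Matrix.parallel_decomposition (hBs : B.IsSymm) (hPs : Pᵀ = P)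
    (hPMP : P * (A + B) * P = P) (hMPB : (A + B) * P * B = B) :
    (P * B)ᵀ * A * (P * B) + (1 - P * B)ᵀ * B * (1 - P * B) = A * P * B := by
  rw [transpose_sub, transpose_one, transpose_mul, hPs, hBs.eq]
  calc B * P * A * (P * B) + (1 - B * P) * B * (1 - P * B)
      = B * (P * (A + B) * P) * B + B - B * P * B - B * P * B := by noncomm_ring
    _ = (A + B) * P * B - B * P * B := by rw [hPMP, hMPB]; abel
    _ = A * P * B := by noncomm_ring

end MatrixIdentities

section ParallelSum

variable {F : Type*} [Field F] [LinearOrder F] [IsStrictOrderedRing F] {n : ℕ}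
  {A B P : Matrix (Fin n) (Fin n) F}

lemma mul_mul_add_eq_left (hAs : A.IsSymm) (hA : PSD A) (hB : PSD B)
    (hP : IsMoorePenrose (A + B) P) : A * P * (A + B) = A :=
  mul_mul_eq_of_ker_le hP.1 fun _ hv => mulVec_eq_zero_of_add_mulVec_eq_zero hAs hA hB hv

lemma add_mul_mul_eq_right (hAs : A.IsSymm) (hBs : B.IsSymm) (hA : PSD A) (hB : PSD B)
    (hP : IsMoorePenrose (A + B) P) : (A + B) * P * B = B := by
  have h := congrArg transpose (mul_mul_add_eq_left hBs hB hA (by rwa [add_comm] at hP))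
  rwa [transpose_mul, transpose_mul, add_comm B A, (hAs.add hBs).eq,
    hP.transpose_eq (hAs.add hBs), hBs.eq, ← mul_assoc] at h

lemma sub_mul_mul_eq_left (hAs : A.IsSymm) (hA : PSD A) (hB : PSD B)
    (hP : IsMoorePenrose (A + B) P) : A - A * P * B = A * P * A := by
  have h := mul_mul_add_eq_left hAs hA hB hP
  rw [mul_add] at h
  exact sub_eq_of_eq_add h.symm

end ParallelSum

theorem stmt_16 (F : Type*) [Field F] [LinearOrder F] [IsStrictOrderedRing F] (n : ℕ)
    (A B : Matrix (Fin n) (Fin n) F)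
    (hAs : A.IsSymm) (hBs : B.IsSymm) (hA : PSD A) (hB : PSD B)
    (P : Matrix (Fin n) (Fin n) F) (hP : IsMoorePenrose (A + B) P) :
    Sqsupseteq (A * P * B) A ∧ Sqsupseteq (A * P * B) B ∧
      ∀ C : Matrix (Fin n) (Fin n) F, C.IsSymm → PSD C →
        Sqsupseteq C A → Sqsupseteq C B → Sqsupseteq C (A * P * B) := by
  have hPs := hP.transpose_eq (hAs.add hBs)
  have hP_psd := hP.psd (hAs.add hBs) (hA.add hB)
  have hMPB := add_mul_mul_eq_right hAs hBs hA hB hP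
  refine ⟨⟨1, ?_⟩, ⟨1, ?_⟩, fun C _ hC hCA hCB => ?_⟩
  · rw [Nat.cast_one, one_smul, sub_mul_mul_eq_left hAs hA hB hP]
    simpa only [hAs.eq] using hP_psd.transpose_mul_mul A
  · rw [Nat.cast_one, one_smul, Matrix.sub_mul_mul_eq_right hMPB]
    simpa only [hBs.eq] using hP_psd.transpose_mul_mul B
  · refine sqsupseteq_of_forall_exists_add_le hA hB hC hCA hCB fun v =>
      ⟨(P * B) *ᵥ v, (1 - P * B) *ᵥ v, by rw [← add_mulVec, add_sub_cancel, one_mulVec],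
        le_of_eq ?_⟩
    rw [← Matrix.parallel_decomposition hBs hPs hP.2.1 hMPB, add_mulVec, dotProduct_add,
      dotProduct_transpose_mul_mul_mulVec, dotProduct_transpose_mul_mul_mulVec]
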